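/- arXiv:0907.2266 — 2 statements merged into one kernel-verified Lean document; each statement's English description precedes it below -/
import Mathlib

section
/- Let R be a 2-torsion free σ-prime ring and U a nonzero σ-Lie ideal of R. If d is a derivation of R commuting with σ (d∘σ = σ∘d) such that d(U) = 0, then d = 0 or U ⊆ Z(R). -/
/-!
If `d ≠ 0` vanishes on the σ-Lie ideal `U`, then `⁅u, d r⁆ = d ⁅u, r⁆ = 0` for `u ∈ U`, and
expanding this at `r = x y z` with `x ∈ U` gives `⁅u, x⁆ R d(z) = 0`; since `d` commutes with `σ`,
σ-primeness forces `⁅U, U⁆ = 0`. For `u ∈ U` the inner derivation `δ = ⁅u, ·⁆` then satisfies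
`δ² = 0` (as `δ r ∈ U`), and 2-torsion freeness turns this into `δ(R) R δ(R) = 0`. When
`σ u = ± u` the element `σ (δ r)` is `∓ δ (σ r)`, so σ-primeness gives `δ = 0`. Finally
`2 ⁅u, r⁆ = ⁅u + σ u, r⁆ + ⁅u - σ u, r⁆`, where `u ± σ u ∈ U` are of this kind.
-/

section

variable {R : Type*} [Ring R]

attribute [local instance] LieRing.ofAssociativeRing

def IsSigmaPrime (σ : R → R) : Prop :=
  ∀ a b : R, (∀ r : R, a * r * b = 0) → (∀ r : R, a * r * σ b = 0) → a = 0 ∨ b = 0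

theorem lie_mul_right (u a b : R) : ⁅u, a * b⁆ = ⁅u, a⁆ * b + a * ⁅u, b⁆ := by
  simp only [Ring.lie_def]
  noncomm_ring

theorem map_lie_of_map_mul {d : R →+ R} (hd : ∀ x y, d (x * y) = d x * y + x * d y) (x y : R) :
    d ⁅x, y⁆ = ⁅d x, y⁆ + ⁅x, d y⁆ := by
  simp only [Ring.lie_def, map_sub, hd]
  abel

theorem map_lie_of_map_mul_rev {σ : R →+ R} (hσ : ∀ x y, σ (x * y) = σ y * σ x) (x y : R) :
    σ ⁅x, y⁆ = ⁅σ y, σ x⁆ := by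
  simp only [Ring.lie_def, map_sub, hσ]

theorem lie_mul_mul_map_eq_zero {d : R →+ R} (hd : ∀ x y, d (x * y) = d x * y + x * d y)
    {u : R} (hu : ∀ r, ⁅u, d r⁆ = 0) {x : R} (hx : d x = 0) (y z : R) :
    ⁅u, x⁆ * y * d z = 0 := by
  have hdx : ∀ b, ⁅u, x⁆ * d b = 0 := fun b => by
    simpa only [hd, hx, lie_add, lie_mul_right, hu, mul_zero, zero_mul, add_zero, zero_add]
      using hu (x * b)
  simpa only [hd, mul_add, ← mul_assoc, hdx, zero_mul, zero_add] using hdx (y * z)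

theorem lie_mul_mul_lie_eq_zero (htor : ∀ x : R, x + x = 0 → x = 0) {u : R}
    (hu : ∀ r : R, ⁅u, ⁅u, r⁆⁆ = 0) (r y z : R) : ⁅u, r⁆ * y * ⁅u, z⁆ = 0 := by
  have hsq : ∀ a b : R, ⁅u, a⁆ * ⁅u, b⁆ = 0 := fun a b => by
    apply htor
    -- `δ² (a b) = δ² a · b + 2 δ a · δ b + a · δ² b` for the derivation `δ = ⁅u, ·⁆`
    simpa only [lie_mul_right, lie_add, hu, zero_mul, mul_zero, add_zero, zero_add, ← add_assoc]
      using hu (a * b)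
  have h := hsq r (y * z)
  rwa [lie_mul_right, mul_add, ← mul_assoc, hsq, zero_mul, zero_add, ← mul_assoc] at h

theorem IsSigmaPrime.lie_eq_zero_of_derivation_eq_zero_on {σ : R → R} (hsp : IsSigmaPrime σ)
    {d : R →+ R} (hd : ∀ x y, d (x * y) = d x * y + x * d y) (hdσ : ∀ x, d (σ x) = σ (d x))
    {U : AddSubgroup R} (hLie : ∀ u ∈ U, ∀ r : R, ⁅u, r⁆ ∈ U) (hdU : ∀ u ∈ U, d u = 0)
    {z : R} (hz : d z ≠ 0) {u x : R} (hu : u ∈ U) (hx : x ∈ U) : ⁅u, x⁆ = 0 := by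
  have hud : ∀ r, ⁅u, d r⁆ = 0 := fun r => by
    simpa only [map_lie_of_map_mul hd, hdU u hu, zero_lie, zero_add] using hdU _ (hLie u hu r)
  have hσz : ∀ r, ⁅u, x⁆ * r * σ (d z) = 0 := fun r => by
    rw [← hdσ]
    exact lie_mul_mul_map_eq_zero hd hud (hdU x hx) r (σ z)
  exact (hsp _ _ (fun r => lie_mul_mul_map_eq_zero hd hud (hdU x hx) r z) hσz).resolve_right hz

theorem IsSigmaPrime.lie_eq_zero_of_map_eq_or_eq_neg {σ : R →+ R} (hsp : IsSigmaPrime σ)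
    (hσ : ∀ x y, σ (x * y) = σ y * σ x) {u : R} (hu : ∀ r y z : R, ⁅u, r⁆ * y * ⁅u, z⁆ = 0)
    (hσu : σ u = u ∨ σ u = -u) (r : R) : ⁅u, r⁆ = 0 := by
  have hσr : ∀ s, ⁅u, r⁆ * s * σ ⁅u, r⁆ = 0 := fun s => by
    rcases hσu with h | h
    · rw [map_lie_of_map_mul_rev hσ, h, ← lie_skew (σ r) u, mul_neg, hu, neg_zero]
    · rw [map_lie_of_map_mul_rev hσ, h, lie_neg, lie_skew u (σ r), hu]
  exact (hsp _ _ (fun s => hu r s r) hσr).elim id id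

theorem IsSigmaPrime.lie_eq_zero_of_lie_mem_eq_zero {σ : R →+ R} (hsp : IsSigmaPrime σ)
    (hσ : ∀ x y, σ (x * y) = σ y * σ x) (hσinv : ∀ x, σ (σ x) = x)
    (htor : ∀ x : R, x + x = 0 → x = 0) {U : AddSubgroup R}
    (hLie : ∀ u ∈ U, ∀ r : R, ⁅u, r⁆ ∈ U) (hσU : ∀ u ∈ U, σ u ∈ U)
    (hUU : ∀ u ∈ U, ∀ x ∈ U, ⁅u, x⁆ = 0) {u : R} (hu : u ∈ U) (r : R) : ⁅u, r⁆ = 0 := by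
  have hcen : ∀ v ∈ U, (σ v = v ∨ σ v = -v) → ⁅v, r⁆ = 0 := fun v hv hσv =>
    hsp.lie_eq_zero_of_map_eq_or_eq_neg hσ
      (lie_mul_mul_lie_eq_zero htor fun s => hUU v hv _ (hLie v hv s)) hσv r
  have hsym := hcen (u + σ u) (U.add_mem hu (hσU u hu)) (.inl (by rw [map_add, hσinv, add_comm]))
  have hskew := hcen (u - σ u) (U.sub_mem hu (hσU u hu)) (.inr (by rw [map_sub, hσinv, neg_sub]))
  apply htor
  calc ⁅u, r⁆ + ⁅u, r⁆ = ⁅u + σ u, r⁆ + ⁅u - σ u, r⁆ := by rw [add_lie, sub_lie]; abel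
    _ = 0 := by rw [hsym, hskew, add_zero]

end

theorem stmt5_general (R : Type*) [Ring R]
  (σ : R → R)
  (hσadd : ∀ x y : R, σ (x + y) = σ x + σ y)
  (hσmul : ∀ x y : R, σ (x * y) = σ y * σ x)
  (hσinv : ∀ x : R, σ (σ x) = x)
  (htor : ∀ x : R, x + x = 0 → x = 0)
  (hsp : ∀ a b : R, (∀ r : R, a * r * b = 0) → (∀ r : R, a * r * σ b = 0) → a = 0 ∨ b = 0)
  (U : AddSubgroup R)
  (hLie : ∀ u ∈ U, ∀ r : R, u * r - r * u ∈ U)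
  (hσU : ∀ u ∈ U, σ u ∈ U)
  (d : R → R)
  (hdadd : ∀ x y : R, d (x + y) = d x + d y)
  (hdmul : ∀ x y : R, d (x * y) = d x * y + x * d y)
  (hdσ : ∀ x : R, d (σ x) = σ (d x))
  (hdU : ∀ u ∈ U, d u = 0) :
    (∀ x : R, d x = 0) ∨ (∀ u ∈ U, ∀ r : R, u * r = r * u) := by
  by_cases hd : ∀ x, d x = 0
  · exact .inl hd
  obtain ⟨z, hz⟩ := not_forall.mp hd
  have hUU : ∀ u ∈ U, ∀ x ∈ U, ⁅u, x⁆ = 0 := fun u hu x hx =>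
    IsSigmaPrime.lie_eq_zero_of_derivation_eq_zero_on (d := AddMonoidHom.mk' d hdadd) hsp hdmul
      hdσ hLie hdU hz hu hx
  exact .inr fun u hu r => sub_eq_zero.mp <|
    IsSigmaPrime.lie_eq_zero_of_lie_mem_eq_zero (σ := AddMonoidHom.mk' σ hσadd) hsp hσmul hσinv
      htor hLie hσU hUU hu r

theorem stmt5 (R : Type*) [Ring R]
  (σ : R → R)
  (hσadd : ∀ x y : R, σ (x + y) = σ x + σ y)
  (hσmul : ∀ x y : R, σ (x * y) = σ y * σ x)
  (hσinv : ∀ x : R, σ (σ x) = x)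
  (htor : ∀ x : R, x + x = 0 → x = 0)
  (hsp : ∀ a b : R, (∀ r : R, a * r * b = 0) → (∀ r : R, a * r * σ b = 0) → a = 0 ∨ b = 0)
  (U : AddSubgroup R)
  (hLie : ∀ u ∈ U, ∀ r : R, u * r - r * u ∈ U)
  (hσU : ∀ u ∈ U, σ u ∈ U)
  (hUnz : ∃ u ∈ U, u ≠ (0 : R))
  (d : R → R)
  (hdadd : ∀ x y : R, d (x + y) = d x + d y)
  (hdmul : ∀ x y : R, d (x * y) = d x * y + x * d y)
  (hdσ : ∀ x : R, d (σ x) = σ (d x))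
  (hdU : ∀ u ∈ U, d u = 0) :
    (∀ x : R, d x = 0) ∨ (∀ u ∈ U, ∀ r : R, u * r = r * u) :=
  stmt5_general R σ hσadd hσmul hσinv htor hsp U hLie hσU d hdadd hdmul hdσ hdU
end

section
/- Let R be a 2-torsion free σ-prime ring and d a nonzero derivation of R. If d is centralizing on R, i.e., [d(x), x] ∈ Z(R) for all x ∈ R, then R is commutative. -/
/-!
A σ-prime ring is semiprime: if `aRa = 0` and `a ≠ 0`, then `σ`-primeness applied to `a` and
`a r σ(a)` gives `aRσ(a) = 0`, and then applied to `a` and `a` gives `a = 0`.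

In a semiprime 2-torsion free ring a centralizing derivation is commuting (Posner): linearizing
`[d x, x] ∈ Z` at `(x, x²)` shows that `4 [d x, x] x`, hence `[d x, x] x`, is central, so
`[d x, x]` annihilates `[x, R]`; in particular `[d x, x]² = 0`, and a central element of square
zero vanishes by semiprimeness.

For a commuting derivation, linearizing `[d x, x] = 0` gives `d(x) R [y, x] = 0`, and a second
linearization together with semiprimeness gives `d(R) R [R, R] = 0`. Since `σ` maps commutators
to commutators, `σ`-primeness applied to `d x₀ ≠ 0` and `[x, y]` forces `[x, y] = 0`.
-/

def IsSemiprimeRing (R : Type*) [Ring R] : Prop :=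
  ∀ a : R, (∀ r, a * r * a = 0) → a = 0

def IsStarPrime (R : Type*) [Ring R] [Star R] : Prop :=
  ∀ a b : R, (∀ r, a * r * b = 0) → (∀ r, a * r * star b = 0) → a = 0 ∨ b = 0

section

variable {R : Type*} [Ring R]

theorem IsSemiprimeRing.mul_mul_eq_zero_symm (hR : IsSemiprimeRing R) {a b : R}
    (h : ∀ r, a * r * b = 0) (r : R) : b * r * a = 0 :=
  hR _ fun s => by
    calc b * r * a * s * (b * r * a) = b * r * (a * s * b * (r * a)) := by noncomm_ring
      _ = 0 := by rw [h, zero_mul, mul_zero]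

theorem IsStarPrime.isSemiprimeRing [StarMul R] (hR : IsStarPrime R) : IsSemiprimeRing R := by
  intro a ha
  by_contra ha0
  have hstar (r : R) : a * r * star a = 0 := by
    have hleft (u : R) : a * u * (a * r * star a) = 0 := by
      rw [show a * u * (a * r * star a) = a * u * a * (r * star a) by noncomm_ring, ha, zero_mul]
    have hright (u : R) : a * u * star (a * r * star a) = 0 := by
      rw [star_mul, star_star, star_mul, ← mul_assoc, ← mul_assoc, ha, zero_mul, zero_mul]
    exact (hR _ _ hleft hright).resolve_left ha0
  exact ha0 ((hR a a ha hstar).elim id id)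

section Derivation

variable {d : R →+ R}

theorem lie_deriv_add_lie_deriv_mem {S : AddSubgroup R} (hS : ∀ x, ⁅d x, x⁆ ∈ S) (x y : R) :
    ⁅d x, y⁆ + ⁅d y, x⁆ ∈ S := by
  have h := sub_mem (sub_mem (hS (x + y)) (hS x)) (hS y)
  convert h using 1
  simp only [map_add, Ring.lie_def]
  noncomm_ring

theorem lie_deriv_mul_self_mem_center (hd : ∀ x y, d (x * y) = d x * y + x * d y)
    (htor : ∀ x : R, x + x = 0 → x = 0) (hcent : ∀ x, ⁅d x, x⁆ ∈ Subring.center R) (x : R) :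
    ⁅d x, x⁆ * x ∈ Subring.center R := by
  set c := ⁅d x, x⁆
  have hcx : x * c = c * x := Subring.mem_center_iff.mp (hcent x) x
  have h4 : ⁅d x, x * x⁆ + ⁅d (x * x), x⁆ = c * x + x * c + (c * x + x * c) := by
    rw [hd]; simp only [c, Ring.lie_def]; noncomm_ring
  have hmem := lie_deriv_add_lie_deriv_mem (S := (Subring.center R).toAddSubgroup) hcent x (x * x)
  rw [h4, hcx] at hmem
  refine Subring.mem_center_iff.mpr fun g => sub_eq_zero.mp (htor _ (htor _ ?_))
  rw [← sub_eq_zero.mpr (Subring.mem_center_iff.mp hmem g)]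
  noncomm_ring

theorem lie_deriv_mul_lie_eq_zero (hd : ∀ x y, d (x * y) = d x * y + x * d y)
    (htor : ∀ x : R, x + x = 0 → x = 0) (hcent : ∀ x, ⁅d x, x⁆ ∈ Subring.center R) (x r : R) :
    ⁅d x, x⁆ * ⁅x, r⁆ = 0 := by
  have hc := Subring.mem_center_iff.mp (hcent x) r
  have hcx := Subring.mem_center_iff.mp (lie_deriv_mul_self_mem_center hd htor hcent x) r
  calc ⁅d x, x⁆ * ⁅x, r⁆ = ⁅d x, x⁆ * x * r - ⁅d x, x⁆ * r * x := by
        rw [Ring.lie_def x r]; noncomm_ring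
    _ = 0 := by rw [← hc, ← hcx, mul_assoc, sub_self]

theorem IsSemiprimeRing.lie_deriv_self_eq_zero (hR : IsSemiprimeRing R)
    (hd : ∀ x y, d (x * y) = d x * y + x * d y) (htor : ∀ x : R, x + x = 0 → x = 0)
    (hcent : ∀ x, ⁅d x, x⁆ ∈ Subring.center R) (x : R) : ⁅d x, x⁆ = 0 := by
  have hsq : ⁅d x, x⁆ * ⁅d x, x⁆ = 0 := by
    rw [← neg_eq_zero, ← lie_deriv_mul_lie_eq_zero hd htor hcent x (d x)]
    simp only [Ring.lie_def]; noncomm_ring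
  refine hR _ fun r => ?_
  rw [← Subring.mem_center_iff.mp (hcent x) r, mul_assoc, hsq, mul_zero]

theorem lie_deriv_add_lie_deriv_eq_zero (hcomm : ∀ x, ⁅d x, x⁆ = 0) (x y : R) :
    ⁅d x, y⁆ + ⁅d y, x⁆ = 0 :=
  AddSubgroup.mem_bot.mp <|
    lie_deriv_add_lie_deriv_mem (fun z => AddSubgroup.mem_bot.mpr (hcomm z)) x y

theorem deriv_mul_lie_self_eq_zero (hd : ∀ x y, d (x * y) = d x * y + x * d y)
    (hcomm : ∀ x, ⁅d x, x⁆ = 0) (x y : R) : d x * ⁅y, x⁆ = 0 :=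
  calc d x * ⁅y, x⁆ = ⁅d x, x * y⁆ + ⁅d (x * y), x⁆ - x * (⁅d x, y⁆ + ⁅d y, x⁆)
        - (⁅d x, x⁆ * y + ⁅d x, x⁆ * y) := by
        rw [hd]; simp only [Ring.lie_def]; noncomm_ring
    _ = 0 := by
        rw [lie_deriv_add_lie_deriv_eq_zero hcomm, lie_deriv_add_lie_deriv_eq_zero hcomm, hcomm]
        simp

theorem deriv_mul_mul_lie_self_eq_zero (hd : ∀ x y, d (x * y) = d x * y + x * d y)
    (hcomm : ∀ x, ⁅d x, x⁆ = 0) (x r y : R) : d x * r * ⁅y, x⁆ = 0 :=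
  calc d x * r * ⁅y, x⁆ = d x * ⁅r * y, x⁆ - d x * ⁅r, x⁆ * y := by
        simp only [Ring.lie_def]; noncomm_ring
    _ = 0 := by
        rw [deriv_mul_lie_self_eq_zero hd hcomm, deriv_mul_lie_self_eq_zero hd hcomm, zero_mul,
          sub_zero]

theorem IsSemiprimeRing.deriv_mul_mul_lie_eq_zero (hR : IsSemiprimeRing R)
    (hd : ∀ x y, d (x * y) = d x * y + x * d y) (hcomm : ∀ x, ⁅d x, x⁆ = 0) (x r y z : R) :
    d x * r * ⁅y, z⁆ = 0 := by
  have hswap (s : R) : ⁅y, z⁆ * s * d z = 0 :=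
    hR.mul_mul_eq_zero_symm (fun r => deriv_mul_mul_lie_self_eq_zero hd hcomm z r y) s
  have hlin : d x * r * ⁅y, z⁆ = -(d z * r * ⁅y, x⁆) :=
    calc d x * r * ⁅y, z⁆ = d (x + z) * r * ⁅y, x + z⁆ - d x * r * ⁅y, x⁆
          - d z * r * ⁅y, z⁆ - d z * r * ⁅y, x⁆ := by
          simp only [map_add, Ring.lie_def]; noncomm_ring
      _ = -(d z * r * ⁅y, x⁆) := by
          simp only [deriv_mul_mul_lie_self_eq_zero hd hcomm, zero_sub, sub_zero]
  refine hR _ fun s => ?_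
  calc d x * r * ⁅y, z⁆ * s * (d x * r * ⁅y, z⁆)
      = -(d x * r * (⁅y, z⁆ * s * d z) * (r * ⁅y, x⁆)) := by nth_rewrite 2 [hlin]; noncomm_ring
    _ = 0 := by rw [hswap, mul_zero, zero_mul, neg_zero]

end Derivation

theorem IsStarPrime.commute_of_lie_deriv_mem_center [StarRing R] (hR : IsStarPrime R)
    (htor : ∀ x : R, x + x = 0 → x = 0) {d : R →+ R} (hd : ∀ x y, d (x * y) = d x * y + x * d y)
    (hd0 : d ≠ 0) (hcent : ∀ x, ⁅d x, x⁆ ∈ Subring.center R) (x y : R) : Commute x y := by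
  have hsemi := hR.isSemiprimeRing
  have key := hsemi.deriv_mul_mul_lie_eq_zero hd (hsemi.lie_deriv_self_eq_zero hd htor hcent)
  obtain ⟨a, ha⟩ := DFunLike.ne_iff.mp hd0
  have hstar : star ⁅x, y⁆ = ⁅star y, star x⁆ := by simp only [Ring.lie_def, star_sub, star_mul]
  have h := (hR _ _ (key a · x y) (fun r => hstar ▸ key a r _ _)).resolve_left ha
  rwa [Ring.lie_def, sub_eq_zero] at h

end

theorem stmt9 (R : Type*) [Ring R]
  (σ : R → R)
  (hσadd : ∀ x y : R, σ (x + y) = σ x + σ y)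
  (hσmul : ∀ x y : R, σ (x * y) = σ y * σ x)
  (hσinv : ∀ x : R, σ (σ x) = x)
  (htor : ∀ x : R, x + x = 0 → x = 0)
  (hsp : ∀ a b : R, (∀ r : R, a * r * b = 0) → (∀ r : R, a * r * σ b = 0) → a = 0 ∨ b = 0)
  (d : R → R)
  (hdadd : ∀ x y : R, d (x + y) = d x + d y)
  (hdmul : ∀ x y : R, d (x * y) = d x * y + x * d y)
  (hdnz : ∃ x : R, d x ≠ 0)
  (hcent : ∀ x r : R, (d x * x - x * d x) * r = r * (d x * x - x * d x)) :
    ∀ x y : R, x * y = y * x := by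
  let _ : StarRing R :=
    { star := σ, star_involutive := hσinv, star_mul := hσmul, star_add := hσadd }
  let D : R →+ R := AddMonoidHom.mk' d hdadd
  exact IsStarPrime.commute_of_lie_deriv_mem_center (d := D) hsp htor hdmul
    (DFunLike.ne_iff.mpr hdnz) fun x => Subring.mem_center_iff.mpr fun r => (hcent x r).symm
end
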